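/- Let A be a local integral domain that is integrally closed in its fraction field K, and suppose K is separably closed. Then A is a henselian local ring and the residue field of A is separably closed. Consequently, every totally separably closed integral scheme is everywhere strictly local: each of its local rings O_{X,x} is henselian with separably closed residue field. -/
import Mathlib


/-!
STATEMENT 11: (i) A local integral domain `A` that is integrally closed in its
fraction field `K`, with `K` separably closed, is a henselian local ring with
separably closed residue field.  (ii) Consequently, every totally separably
closed integral scheme (normal, with separably closed function field) is
everywhere strictly local: each local ring `𝒪_{X,x}` is henselian with
separably closed residue field.
-/

open AlgebraicGeometry Polynomial

/-- Over a separably closed field, a polynomial with no roots has zero derivative. -/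
lemma TSC.deriv_zero_of_no_root {K : Type*} [Field K] [IsSepClosed K] :
    ∀ (n : ℕ) (f : K[X]), f.natDegree ≤ n → (∀ x : K, f.eval x ≠ 0) →
      f.derivative = 0 := by
  intro n
  induction n with
  | zero =>
    intro f hdeg _
    rw [Polynomial.eq_C_of_natDegree_le_zero hdeg]
    exact Polynomial.derivative_C
  | succ n ih =>
    intro f hdeg hnoroot
    by_cases h0 : f.natDegree = 0
    · rw [Polynomial.eq_C_of_natDegree_le_zero h0.le]
      exact Polynomial.derivative_C
    · have hf0 : f ≠ 0 := fun h => h0 (by simp [h])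
      have hfu : ¬IsUnit f := fun h => h0 (Polynomial.natDegree_eq_zero_of_isUnit h)
      obtain ⟨q, hq_irr, g, hg⟩ := WfDvdMonoid.exists_irreducible_factor hfu hf0
      have hg0 : g ≠ 0 := fun h => hf0 (by rw [hg, h, mul_zero])
      have hq0 : q ≠ 0 := hq_irr.ne_zero
      -- q has no roots (it divides f)
      have hqnoroot : ∀ x : K, q.eval x ≠ 0 := by
        intro x hx
        exact hnoroot x (by rw [hg, Polynomial.eval_mul, hx, zero_mul])
      -- q is not separable, hence q' = 0
      have hqsep : ¬q.Separable := by
        intro hsep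
        obtain ⟨x, hx⟩ := IsSepClosed.exists_root q
          (fun h => hq_irr.natDegree_pos.ne' (Polynomial.natDegree_eq_zero_iff_degree_le_zero.mpr h.le)) hsep
        exact hqnoroot x hx
      have hqd : q.derivative = 0 := by
        by_contra h
        exact hqsep ((Polynomial.separable_iff_derivative_ne_zero hq_irr).mpr h)
      -- g has no roots and smaller degree
      have hgnoroot : ∀ x : K, g.eval x ≠ 0 := by
        intro x hx
        exact hnoroot x (by rw [hg, Polynomial.eval_mul, hx, mul_zero])
      have hgdeg : g.natDegree ≤ n := by
        have hq1 : 1 ≤ q.natDegree := hq_irr.natDegree_pos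
        have hmul := Polynomial.natDegree_mul hq0 hg0
        rw [hg, hmul] at hdeg
        omega
      have hgd : g.derivative = 0 := ih g hgdeg hgnoroot
      rw [hg, Polynomial.derivative_mul, hqd, hgd, zero_mul, mul_zero, add_zero]

/-- A root in the fraction field of a monic polynomial over an integrally closed
domain comes from the ring, and gives a linear factor. -/
lemma TSC.exists_factor {A : Type*} [CommRing A] [IsDomain A] [IsIntegrallyClosed A]
    {f : A[X]} (hf : f.Monic) {r : FractionRing A}
    (hr : (f.map (algebraMap A (FractionRing A))).eval r = 0) :
    ∃ r' : A, algebraMap A (FractionRing A) r' = r ∧ ∃ g : A[X], f = (X - C r') * g := by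
  have hint : IsIntegral A r := ⟨f, hf, by rwa [Polynomial.eval_map] at hr⟩
  obtain ⟨r', hr'⟩ := IsIntegrallyClosed.isIntegral_iff.mp hint
  have hroot : f.eval r' = 0 := by
    apply IsFractionRing.injective A (FractionRing A)
    rw [map_zero, ← Polynomial.eval₂_at_apply, ← Polynomial.eval_map, hr', hr]
  obtain ⟨g, hg⟩ := Polynomial.dvd_iff_isRoot.mpr hroot
  exact ⟨r', hr', g, hg⟩

/-- The key henselian property, proved by induction on the degree. -/
lemma TSC.henselian_aux {A : Type*} [CommRing A] [IsDomain A] [IsLocalRing A]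
    [IsIntegrallyClosed A] [IsSepClosed (FractionRing A)] :
    ∀ (n : ℕ) (f : A[X]), f.natDegree ≤ n → f.Monic →
      ∀ a₀ : A, f.eval a₀ ∈ IsLocalRing.maximalIdeal A →
        IsUnit (f.derivative.eval a₀) →
        ∃ a : A, f.IsRoot a ∧ a - a₀ ∈ IsLocalRing.maximalIdeal A := by
  intro n
  induction n with
  | zero =>
    intro f hdeg hmonic a₀ ha₀ _
    rw [(Polynomial.Monic.natDegree_eq_zero hmonic).mp (Nat.le_zero.mp hdeg)] at ha₀
    simp only [Polynomial.eval_one] at ha₀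
    exact absurd ((Ideal.eq_top_iff_one _).mpr ha₀)
      (IsLocalRing.maximalIdeal.isMaximal A).ne_top
  | succ n ih =>
    intro f hdeg hmonic a₀ ha₀ hduni
    by_cases hroot : ∃ r : FractionRing A,
        (f.map (algebraMap A (FractionRing A))).eval r = 0
    · obtain ⟨r, hr⟩ := hroot
      obtain ⟨r', _, g, hg⟩ := TSC.exists_factor hmonic hr
      have hXsub : (X - C r' : A[X]).Monic := Polynomial.monic_X_sub_C r'
      have hgmonic : g.Monic := Polynomial.Monic.of_mul_monic_left hXsub (hg ▸ hmonic)
      by_cases hm : r' - a₀ ∈ IsLocalRing.maximalIdeal A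
      · refine ⟨r', ?_, hm⟩
        rw [hg]
        simp [Polynomial.IsRoot, Polynomial.eval_mul]
      · have hru : a₀ - r' ∉ IsLocalRing.maximalIdeal A := by
          intro h
          exact hm (by simpa using (IsLocalRing.maximalIdeal A).neg_mem h)
        have hprime : (IsLocalRing.maximalIdeal A).IsPrime :=
          (IsLocalRing.maximalIdeal.isMaximal A).isPrime
        have hfval : (a₀ - r') * g.eval a₀ ∈ IsLocalRing.maximalIdeal A := by
          have : f.eval a₀ = (a₀ - r') * g.eval a₀ := by
            rw [hg]; simp [Polynomial.eval_mul]
          rwa [this] at ha₀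
        have hgval : g.eval a₀ ∈ IsLocalRing.maximalIdeal A :=
          (hprime.mem_or_mem hfval).resolve_left hru
        have hderiv : f.derivative.eval a₀
            = g.eval a₀ + (a₀ - r') * g.derivative.eval a₀ := by
          rw [hg, Polynomial.derivative_mul, Polynomial.derivative_X_sub_C]
          simp [Polynomial.eval_mul]
        have hgd : IsUnit (g.derivative.eval a₀) := by
          by_contra h
          have h1 : g.derivative.eval a₀ ∈ IsLocalRing.maximalIdeal A :=
            (IsLocalRing.mem_maximalIdeal _).mpr h
          have h2 : f.derivative.eval a₀ ∈ IsLocalRing.maximalIdeal A := by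
            rw [hderiv]
            exact Ideal.add_mem _ hgval (Ideal.mul_mem_left _ _ h1)
          exact ((IsLocalRing.mem_maximalIdeal _).mp h2) hduni
        have hgdeg : g.natDegree ≤ n := by
          have hX0 : (X - C r' : A[X]) ≠ 0 := hXsub.ne_zero
          have hg0 : g ≠ 0 := hgmonic.ne_zero
          have := Polynomial.natDegree_mul hX0 hg0
          rw [Polynomial.natDegree_X_sub_C] at this
          rw [hg] at hdeg
          omega
        obtain ⟨a, ha, ham⟩ := ih g hgdeg hgmonic a₀ hgval hgd
        refine ⟨a, ?_, ham⟩
        rw [hg]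
        simp only [Polynomial.IsRoot, Polynomial.eval_mul]
        rw [ha.eq_zero, mul_zero]
    · push_neg at hroot
      have hd0 : (f.map (algebraMap A (FractionRing A))).derivative = 0 :=
        TSC.deriv_zero_of_no_root _ _ le_rfl hroot
      rw [Polynomial.derivative_map] at hd0
      have : f.derivative = 0 :=
        (Polynomial.map_eq_zero_iff (IsFractionRing.injective A (FractionRing A))).mp hd0
      rw [this] at hduni
      simp only [Polynomial.eval_zero] at hduni
      exact absurd hduni not_isUnit_zero

/-- The residue field of such a ring is separably closed. -/
lemma TSC.residue_sepClosed {A : Type*} [CommRing A] [IsDomain A] [IsLocalRing A]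
    [IsIntegrallyClosed A] [IsSepClosed (FractionRing A)] :
    IsSepClosed (IsLocalRing.ResidueField A) := by
  apply IsSepClosed.of_exists_root
  intro p hpmonic hpirr hpsep
  have hlift : p ∈ Polynomial.lifts (IsLocalRing.residue A) :=
    (Polynomial.lifts_iff_coeff_lifts _).mpr fun n => Ideal.Quotient.mk_surjective _
  obtain ⟨f, hfmap, _, hfmonic⟩ := Polynomial.lifts_and_degree_eq_and_monic hlift hpmonic
  by_cases hroot : ∃ r : FractionRing A,
      (f.map (algebraMap A (FractionRing A))).eval r = 0
  · obtain ⟨r, hr⟩ := hroot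
    obtain ⟨r', _, g, hg⟩ := TSC.exists_factor hfmonic hr
    refine ⟨IsLocalRing.residue A r', ?_⟩
    rw [← hfmap, hg, Polynomial.map_mul]
    simp [Polynomial.eval_mul]
  · push_neg at hroot
    have hd0 : (f.map (algebraMap A (FractionRing A))).derivative = 0 :=
      TSC.deriv_zero_of_no_root _ _ le_rfl hroot
    rw [Polynomial.derivative_map] at hd0
    have hfd : f.derivative = 0 :=
      (Polynomial.map_eq_zero_iff (IsFractionRing.injective A (FractionRing A))).mp hd0
    have hpd : p.derivative = 0 := by
      rw [← hfmap, Polynomial.derivative_map, hfd, Polynomial.map_zero]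
    exact absurd hpd ((Polynomial.separable_iff_derivative_ne_zero hpirr).mp hpsep)

/-- Separable closedness transfers along ring isomorphisms of fields. -/
lemma TSC.isSepClosed_of_ringEquiv {K L : Type*} [Field K] [Field L]
    (e : K ≃+* L) [IsSepClosed L] : IsSepClosed K := by
  apply IsSepClosed.of_exists_root
  intro p hpmonic hpirr hpsep
  have hdeg : (p.map (e : K →+* L)).degree ≠ 0 := by
    rw [Polynomial.degree_map]
    intro h
    exact hpirr.natDegree_pos.ne' (Polynomial.natDegree_eq_zero_iff_degree_le_zero.mpr h.le)
  obtain ⟨x, hx⟩ := IsSepClosed.exists_root _ hdeg (hpsep.map)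
  refine ⟨e.symm x, ?_⟩
  apply e.injective
  rw [map_zero]
  have h2 : (e : K →+* L) (p.eval (e.symm x)) = 0 := by
    rw [← Polynomial.eval₂_at_apply, ← Polynomial.eval_map]
    simpa using hx
  exact h2

/-- Part (i), universe polymorphic. -/
lemma TSC.main {A : Type*} [CommRing A] [IsDomain A] [IsLocalRing A]
    [IsIntegrallyClosed A] (h : IsSepClosed (FractionRing A)) :
    HenselianLocalRing A ∧ IsSepClosed (IsLocalRing.ResidueField A) := by
  haveI := h
  constructor
  · refine ⟨fun f hf a₀ h₁ h₂ => ?_⟩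
    exact TSC.henselian_aux f.natDegree f le_rfl hf a₀ h₁ h₂
  · exact TSC.residue_sepClosed

theorem tsc_is_everywhere_strictly_local :
    (∀ (A : Type) [CommRing A] [IsDomain A] [IsLocalRing A] [IsIntegrallyClosed A],
      IsSepClosed (FractionRing A) →
        HenselianLocalRing A ∧ IsSepClosed (IsLocalRing.ResidueField A)) ∧
    (∀ (X : Scheme) [IsIntegral X],
      (∀ x : X, IsIntegrallyClosed (X.presheaf.stalk x)) →
      IsSepClosed X.functionField →
        ∀ x : X, HenselianLocalRing (X.presheaf.stalk x) ∧
          IsSepClosed (IsLocalRing.ResidueField (X.presheaf.stalk x))) := by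
  constructor
  · intro A _ _ _ _ h
    exact TSC.main h
  · intro X _ hIC hsep x
    haveI := hIC x
    haveI : IsDomain (X.presheaf.stalk x) :=
      Function.Injective.isDomain (algebraMap (X.presheaf.stalk x) X.functionField)
        (IsFractionRing.injective _ _)
    haveI := hsep
    have hK : IsSepClosed (FractionRing (X.presheaf.stalk x)) :=
      TSC.isSepClosed_of_ringEquiv
        (FractionRing.algEquiv (X.presheaf.stalk x) X.functionField).toRingEquiv
    exact TSC.main hK
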